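/- For every l ∈ L one has z(l) = Σ_{J ⊂ V} (−1)^{|J|+1} w(l,J), where the sum is over all subsets J of V (including the empty set). -/

import Mathlib

open Matrix

open scoped Classical

noncomputable section

namespace Plumbing

variable {V : Type*} [Fintype V] [DecidableEq V]

/-- The rational matrix associated with the integral intersection matrix. -/
def Aq (A : Matrix V V ℤ) : Matrix V V ℚ := A.map fun n => (n : ℚ)

/-- Negative definiteness of the intersection form. -/
def NegDef (A : Matrix V V ℤ) : Prop :=
  ∀ x : V → ℚ, x ≠ 0 → x ⬝ᵥ (Aq A).mulVec x < 0

/-- The dual base element `E*_v`, the `v`-th column of `−A⁻¹`. -/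
def Estar (A : Matrix V V ℤ) (v : V) : V → ℚ := fun w => (-(Aq A)⁻¹) w v

/-- Membership in the dual lattice `L' = {x ∈ ℚ^V : Ax ∈ ℤ^V}`. -/
def memLp (A : Matrix V V ℤ) (x : V → ℚ) : Prop :=
  ∀ v, ∃ n : ℤ, (Aq A).mulVec x v = (n : ℚ)

/-- `x` and `y` are in the same class of `H = L'/L`, i.e. `x - y ∈ L`. -/
def sameClass {W : Type*} (x y : W → ℚ) : Prop := ∀ w, ∃ n : ℤ, x w - y w = (n : ℚ)

/-- The valency of a vertex. -/
def deg {W : Type*} (G : SimpleGraph W) (w : W) : ℕ := (G.neighborSet w).ncard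

/-- The coefficients `c_v(k)`. -/
def ccoef (d k : ℕ) : ℤ :=
  if 2 ≤ d then (-1 : ℤ) ^ k * (Nat.choose (d - 2) k) else (Nat.choose (k + 1 - d) k)

/-- The coefficient `z(l')` of the multivariable series `Z(t)`. -/
def zcoef (A : Matrix V V ℤ) (δ : V → ℕ) (l' : V → ℚ) : ℤ :=
  ∑ᶠ k : V → ℕ,
    if (∑ v, (k v : ℚ) • Estar A v) = l' then ∏ v, ccoef (δ v) (k v) else 0

/-- The counting function `Q_{[x]}(x)`. -/
def Qcount (A : Matrix V V ℤ) (δ : V → ℕ) (x : V → ℚ) : ℤ :=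
  ∑ᶠ l' : V → ℚ,
    if memLp A l' ∧ sameClass l' x ∧ ¬ x ≤ l' then zcoef A δ l' else 0

/-- The counting function `Q_{[x],I}(x)` of the reduced series. -/
def QcountI (A : Matrix V V ℤ) (δ : V → ℕ) (I : Set V) (x : V → ℚ) : ℤ :=
  ∑ᶠ l' : V → ℚ,
    if memLp A l' ∧ sameClass l' x ∧ ¬ (∀ v ∈ I, x v ≤ l' v) then zcoef A δ l' else 0

/-- The counting function `Q_{0,I}(x)` on the integral lattice. -/
def QcountI0 (A : Matrix V V ℤ) (δ : V → ℕ) (I : Set V) (x : V → ℤ) : ℤ :=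
  ∑ᶠ l : V → ℤ,
    if ¬ (∀ v ∈ I, x v ≤ l v) then zcoef A δ (fun v => (l v : ℚ)) else 0

/-- The modified counting function `q_{[x],J}(x)`. -/
def qmod (A : Matrix V V ℤ) (δ : V → ℕ) (J : Set V) (x : V → ℚ) : ℤ :=
  ∑ᶠ l' : V → ℚ,
    if memLp A l' ∧ sameClass l' x ∧ (∀ v ∈ J, l' v < x v) then zcoef A δ l' else 0

/-- The coefficient function of the reduced series `Z(t_W)`. -/
def zred (A : Matrix V V ℤ) (δ : V → ℕ) (W : Set V) (y : W → ℚ) : ℤ :=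
  ∑ᶠ l' : V → ℚ, if (fun w : W => l' w.1) = y then zcoef A δ l' else 0

/-- The intersection matrix of a full subgraph. -/
def subM (A : Matrix V V ℤ) (W : Set V) : Matrix W W ℤ :=
  A.submatrix Subtype.val Subtype.val

/-- The restriction operator `j*_W : L'(T) → L'(T(W))`. -/
def jstar (A : Matrix V V ℤ) (W : Set V) (l' : V → ℚ) : W → ℚ :=
  (Aq (subM A W))⁻¹.mulVec fun w => (Aq A).mulVec l' w.1

/-- The canonical cycle `K`, the unique solution of `(K + E_v, E_v) = -2`. -/
def Kcan (A : Matrix V V ℤ) : V → ℚ :=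
  (Aq A)⁻¹.mulVec fun v => (-2 : ℚ) - (A v v : ℚ)

/-- The Riemann–Roch expression `χ(x) = -(x, x + K)/2`. -/
def chi (A : Matrix V V ℤ) (x : V → ℚ) : ℚ :=
  -(x ⬝ᵥ (Aq A).mulVec (x + Kcan A)) / 2

/-- The weight `w(l, J)` of the lattice cube `(l, J)`. -/
def wcube (A : Matrix V V ℤ) (l : V → ℤ) (J : Finset V) : ℚ :=
  J.powerset.sup' ⟨∅, Finset.empty_mem_powerset J⟩
    fun J' => chi A fun v => (l v : ℚ) + if v ∈ J' then 1 else 0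

/-- Quasipolynomials on `ℤ^W`: polynomial on each coset of a finite index subgroup. -/
def IsQuasiPoly {W : Type*} [Fintype W] (Q : (W → ℤ) → ℚ) : Prop :=
  ∃ Λ : AddSubgroup (W → ℤ), Λ.index ≠ 0 ∧
    ∀ c : W → ℤ, ∃ p : MvPolynomial W ℚ,
      ∀ l ∈ Λ, Q (c + l) = MvPolynomial.eval (fun w => ((c + l) w : ℚ)) p

/-- The vertex set of the connected component `c` of the complement of `I`. -/
def compSet (G : SimpleGraph V) (I : Set V) (c : (G.induce Iᶜ).ConnectedComponent) :
    Set V :=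
  {v : V | ∃ h : v ∈ (Iᶜ : Set V), (G.induce Iᶜ).connectedComponentMk ⟨v, h⟩ = c}

/-- The boundary of a subset `V2` of the vertices. -/
def Bdry (G : SimpleGraph V) (V2 : Set V) : Set V :=
  {u ∈ V2 | ∃ w, w ∉ V2 ∧ G.Adj u w}

/-- `V_{1,u}` : the vertex `u` together with the vertex sets of all connected
components of the complement of `V2` adjacent to `u`. -/
def V1u (G : SimpleGraph V) (V2 : Set V) (u : V) : Set V :=
  insert u {v : V | ∃ h : v ∈ (V2ᶜ : Set V), ∃ w, ∃ hw : w ∈ (V2ᶜ : Set V),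
    G.Adj u w ∧ (G.induce V2ᶜ).connectedComponentMk ⟨v, h⟩ =
      (G.induce V2ᶜ).connectedComponentMk ⟨w, hw⟩}

end Plumbing

open Plumbing

/-!
Put `k = -A l`. Since `E*_v` are the columns of `-A⁻¹`, the only tuple with `Σ k_v E*_v = l` is
`k` itself, so `z(l) = Π_v c_v(k_v)`, read as `0` unless `k ≥ 0`. On the other side
`χ(l + E_J) - χ(l) = Σ_{v ∈ J} (k_v + 1) - e(J)`, where `e(J)` is the number of edges inside `J`;
hence `w(l, J) = χ(l) + F_k(J)` with `F_k(J)` the maximum of this gain over `J' ⊆ J`, and the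
constant `χ(l)` drops out of the alternating sum.

The identity `Σ_J (-1)^{|J|+1} F_k(J) = Π_v c_v(k_v)` is proved for every subtree by attaching
leaves. If `u` is a leaf with neighbour `u₀`, then `F_k(J ∪ {u}) = max(F_k(J), k_u + 1 + F_{k'}(J))`
with `k' = k - e_{u₀}`, and `F_{k'} ≤ F_k ≤ F_{k'} + 1`. So for `k_u < 0` the cubes through `u`
cancel the others, while for `k_u ≥ 0` the alternating sum becomes `S(k) - S(k')`, where `S` is
the one for the tree without `u`. This matches `c_{d+1}(n) = c_d(n) - c_d(n-1)`, the effect of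
the extra factor `1 - t` at `u₀`.
-/

namespace Finset

lemma sup'_powerset_insert {α β : Type*} [DecidableEq α] [SemilatticeSup β]
    {s : Finset α} {a : α} (f : Finset α → β) :
    (insert a s).powerset.sup' (powerset_nonempty _) f
      = s.powerset.sup' (powerset_nonempty _) f
        ⊔ s.powerset.sup' (powerset_nonempty _) (fun t => f (insert a t)) := by
  simp only [powerset_insert]
  rw [sup'_union (powerset_nonempty _) ((powerset_nonempty _).image _), sup'_image]
  rfl

lemma sum_powerset_neg_one_pow_card_mul {α : Type*} {W : Finset α} (hW : W.Nonempty) (c : ℚ) :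
    ∑ J ∈ W.powerset, (-1 : ℚ) ^ #J * c = 0 := by
  have h : ((∑ J ∈ W.powerset, (-1 : ℤ) ^ #J : ℤ) : ℚ) = 0 := by
    rw [sum_powerset_neg_one_pow_card_of_nonempty hW, Int.cast_zero]
  push_cast at h
  rw [← sum_mul, h, zero_mul]

end Finset

namespace Plumbing

open Finset

def ccoefInt (d : ℕ) (n : ℤ) : ℤ := if 0 ≤ n then ccoef d n.toNat else 0

lemma ccoef_succ_succ (d k : ℕ) : ccoef (d + 1) (k + 1) = ccoef d (k + 1) - ccoef d k := by
  rcases Nat.lt_or_ge d 2 with hd | hd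
  · interval_cases d <;> simp [ccoef, Nat.choose_eq_zero_of_lt, Nat.choose_succ_self_right]
  · obtain ⟨n, rfl⟩ := Nat.exists_eq_add_of_le hd
    simp only [ccoef, if_pos (by omega : 2 ≤ 2 + n + 1), if_pos (by omega : 2 ≤ 2 + n),
      show 2 + n + 1 - 2 = n + 1 by omega, show 2 + n - 2 = n by omega, Nat.choose_succ_succ]
    push_cast [pow_succ]
    ring

lemma ccoefInt_succ (d : ℕ) (n : ℤ) : ccoefInt (d + 1) n = ccoefInt d n - ccoefInt d (n - 1) := by
  unfold ccoefInt
  rcases lt_trichotomy n 0 with hn | rfl | hn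
  · rw [if_neg (by omega), if_neg (by omega), if_neg (by omega), sub_zero]
  · simp [ccoef]
  · obtain ⟨k, rfl⟩ : ∃ k : ℕ, n = k + 1 := ⟨n.toNat - 1, by omega⟩
    simp only [show (0 : ℤ) ≤ k + 1 by omega, show (0 : ℤ) ≤ k + 1 - 1 by omega, if_true,
      show ((k : ℤ) + 1).toNat = k + 1 by omega, show ((k : ℤ) + 1 - 1).toNat = k by omega]
    exact ccoef_succ_succ d k

lemma ccoefInt_one (n : ℤ) : ccoefInt 1 n = if 0 ≤ n then 1 else 0 := by
  simp [ccoefInt, ccoef]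

lemma ccoefInt_zero (n : ℤ) : ccoefInt 0 n = max 0 (n + 1) := by
  simp only [ccoefInt, ccoef, show ¬ 2 ≤ 0 by omega, if_false, Nat.sub_zero,
    Nat.choose_succ_self_right]
  split_ifs <;> omega

lemma prod_ccoefInt_add_ite {ι : Type*} [DecidableEq ι] (d : ι → ℕ) (k : ι → ℤ)
    {W : Finset ι} {u₀ : ι} (hu₀ : u₀ ∈ W) :
    ∏ v ∈ W, (ccoefInt (d v + if v = u₀ then 1 else 0) (k v) : ℚ)
      = ∏ v ∈ W, (ccoefInt (d v) (k v) : ℚ)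
        - ∏ v ∈ W, (ccoefInt (d v) ((k - Pi.single u₀ 1 : ι → ℤ) v) : ℚ) := by
  have hrest₁ : ∏ v ∈ W.erase u₀, (ccoefInt (d v + if v = u₀ then 1 else 0) (k v) : ℚ)
      = ∏ v ∈ W.erase u₀, (ccoefInt (d v) (k v) : ℚ) :=
    prod_congr rfl fun v hv => by rw [if_neg (ne_of_mem_erase hv), add_zero]
  have hrest₂ : ∏ v ∈ W.erase u₀, (ccoefInt (d v) ((k - Pi.single u₀ 1 : ι → ℤ) v) : ℚ)
      = ∏ v ∈ W.erase u₀, (ccoefInt (d v) (k v) : ℚ) :=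
    prod_congr rfl fun v hv => by simp [ne_of_mem_erase hv]
  rw [← mul_prod_erase W _ hu₀, ← mul_prod_erase W _ hu₀, ← mul_prod_erase W _ hu₀, hrest₁,
    hrest₂, if_pos rfl, ccoefInt_succ, Pi.sub_apply, Pi.single_eq_same]
  push_cast
  ring

section Gain

variable {V : Type*} (G : SimpleGraph V)

def adjPairCount (J : Finset V) : ℚ := ∑ v ∈ J, ∑ w ∈ J, if G.Adj v w then 1 else 0

-- With `k = -A l` this is `χ(l + E_J) - χ(l)` (see `wcube_eq_chi_add_maxGain`);
-- `adjPairCount G J` counts every edge inside `J` twice.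
def gain (k : V → ℤ) (J : Finset V) : ℚ := ∑ v ∈ J, ((k v : ℚ) + 1) - adjPairCount G J / 2

def maxGain (k : V → ℤ) (J : Finset V) : ℚ := J.powerset.sup' (powerset_nonempty J) (gain G k)

lemma adjPairCount_insert [DecidableEq V] {u : V} {J : Finset V} (hu : u ∉ J) :
    adjPairCount G (insert u J) = adjPairCount G J + 2 * #(J.filter (G.Adj u)) := by
  simp only [adjPairCount, sum_insert hu, G.irrefl, if_false, zero_add, sum_add_distrib,
    natCast_card_filter, G.adj_comm _ u]
  ring

lemma gain_insert [DecidableEq V] (k : V → ℤ) {u : V} {J : Finset V} (hu : u ∉ J) :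
    gain G k (insert u J) = gain G k J + ((k u : ℚ) + 1) - #(J.filter (G.Adj u)) := by
  rw [gain, gain, sum_insert hu, adjPairCount_insert G hu]
  ring

lemma gain_sub_single [DecidableEq V] (k : V → ℤ) (u₀ : V) (J : Finset V) :
    gain G (k - Pi.single u₀ 1) J = gain G k J - if u₀ ∈ J then 1 else 0 := by
  simp only [gain, Pi.sub_apply, Int.cast_sub, sub_add_eq_add_sub, sum_sub_distrib]
  rw [← Int.cast_sum, sum_pi_single' u₀ (1 : ℤ)]
  split_ifs
  · simp only [Int.cast_one]; ring
  · simp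

lemma gain_empty (k : V → ℤ) : gain G k ∅ = 0 := by
  simp [gain, adjPairCount]

lemma maxGain_empty (k : V → ℤ) : maxGain G k ∅ = 0 := by
  simp [maxGain, gain_empty]

lemma maxGain_insert_of_leaf [DecidableEq V] (k : V → ℤ) {u u₀ : V} {J : Finset V} (hu : u ∉ J)
    (hleaf : ∀ w ∈ J, G.Adj u w ↔ w = u₀) :
    maxGain G k (insert u J)
      = max (maxGain G k J) ((k u : ℚ) + 1 + maxGain G (k - Pi.single u₀ 1) J) := by
  rw [maxGain, sup'_powerset_insert, maxGain, maxGain, add_sup']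
  congr 1
  refine sup'_congr _ rfl fun t ht => ?_
  have htJ := mem_powerset.1 ht
  have hfilter : t.filter (G.Adj u) = t.filter (· = u₀) :=
    filter_congr fun w hw => hleaf w (htJ hw)
  rw [gain_insert G k (fun h => hu (htJ h)), gain_sub_single, hfilter, filter_eq']
  split_ifs <;> simp <;> ring

lemma maxGain_sub_single_le [DecidableEq V] (k : V → ℤ) (u₀ : V) (J : Finset V) :
    maxGain G (k - Pi.single u₀ 1) J ≤ maxGain G k J :=
  sup'_mono_fun fun t _ => by rw [gain_sub_single]; split_ifs <;> linarith

lemma maxGain_le_sub_single_add_one [DecidableEq V] (k : V → ℤ) (u₀ : V) (J : Finset V) :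
    maxGain G k J ≤ maxGain G (k - Pi.single u₀ 1) J + 1 := by
  rw [maxGain, maxGain, sup'_add]
  exact sup'_mono_fun fun t _ => by rw [gain_sub_single]; split_ifs <;> linarith

lemma deg_eq_card_filter_adj [Fintype V] (v : V) :
    deg G v = #(univ.filter (G.Adj v)) := by
  rw [deg, ← Set.ncard_coe_finset]
  congr 1
  ext w
  simp

end Gain

section LeafBuilt

variable {V : Type*} [DecidableEq V] (G : SimpleGraph V)

inductive LeafBuilt : Finset V → Prop
  | singleton (v : V) : LeafBuilt {v}
  | insert_leaf {W : Finset V} {u u₀ : V} :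
      LeafBuilt W → u ∉ W → W.filter (G.Adj u) = {u₀} → LeafBuilt (insert u W)

def alternatingMaxGain (k : V → ℤ) (W : Finset V) : ℚ :=
  ∑ J ∈ W.powerset, (-1 : ℚ) ^ (#J + 1) * maxGain G k J

def ccoefProd (k : V → ℤ) (W : Finset V) : ℚ :=
  ∏ v ∈ W, (ccoefInt #(W.filter (G.Adj v)) (k v) : ℚ)

lemma alternatingMaxGain_singleton (k : V → ℤ) (v : V) :
    alternatingMaxGain G k {v} = ccoefProd G k {v} := by
  have hmax : maxGain G k {v} = max 0 ((k v : ℚ) + 1) := by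
    rw [← insert_empty, maxGain_insert_of_leaf G k (u₀ := v) (notMem_empty v) (by simp),
      maxGain_empty, maxGain_empty, add_zero]
  have hdeg : ({v} : Finset V).filter (G.Adj v) = ∅ := by simp
  rw [alternatingMaxGain, ccoefProd, ← insert_empty, sum_powerset_insert (notMem_empty v),
    powerset_empty, sum_singleton, sum_singleton, insert_empty, hmax, maxGain_empty,
    card_singleton, prod_singleton, hdeg, card_empty, ccoefInt_zero]
  push_cast
  ring

lemma alternatingMaxGain_insert_leaf (k : V → ℤ) {W : Finset V} {u u₀ : V} (hu : u ∉ W)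
    (hleaf : W.filter (G.Adj u) = {u₀}) :
    alternatingMaxGain G k (insert u W) = (ccoefInt 1 (k u) : ℚ) *
      (alternatingMaxGain G k W - alternatingMaxGain G (k - Pi.single u₀ 1) W) := by
  have hW : W.Nonempty := ⟨u₀, (mem_filter.1 (hleaf ▸ mem_singleton_self u₀)).1⟩
  have hadj : ∀ J ∈ W.powerset, ∀ w ∈ J, G.Adj u w ↔ w = u₀ := fun J hJ w hw => by
    rw [← mem_singleton, ← hleaf, mem_filter, and_iff_right (mem_powerset.1 hJ hw)]
  have huJ : ∀ J ∈ W.powerset, u ∉ J := fun J hJ h => hu (mem_powerset.1 hJ h)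
  rw [alternatingMaxGain, sum_powerset_insert hu, ccoefInt_one]
  split_ifs with hku
  · have hterm : ∀ J ∈ W.powerset,
        (-1 : ℚ) ^ (#(insert u J) + 1) * maxGain G k (insert u J)
          = (-1 : ℚ) ^ #J * ((k u : ℚ) + 1)
            - (-1 : ℚ) ^ (#J + 1) * maxGain G (k - Pi.single u₀ 1) J := fun J hJ => by
      have hle := maxGain_le_sub_single_add_one G k u₀ J
      have hku' : (0 : ℚ) ≤ k u := by exact_mod_cast hku
      rw [card_insert_of_notMem (huJ J hJ), maxGain_insert_of_leaf G k (huJ J hJ) (hadj J hJ),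
        max_eq_right (by linarith)]
      ring
    rw [sum_congr rfl hterm, sum_sub_distrib, sum_powerset_neg_one_pow_card_mul hW,
      alternatingMaxGain, alternatingMaxGain]
    push_cast
    ring
  · have hterm : ∀ J ∈ W.powerset,
        (-1 : ℚ) ^ (#(insert u J) + 1) * maxGain G k (insert u J)
          = -((-1 : ℚ) ^ (#J + 1) * maxGain G k J) := fun J hJ => by
      have hle := maxGain_sub_single_le G k u₀ J
      have hku' : (k u : ℚ) + 1 ≤ 0 := by exact_mod_cast (by omega : k u + 1 ≤ 0)
      rw [card_insert_of_notMem (huJ J hJ), maxGain_insert_of_leaf G k (huJ J hJ) (hadj J hJ),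
        max_eq_left (by linarith)]
      ring
    rw [sum_congr rfl hterm, sum_neg_distrib]
    push_cast
    ring

lemma card_filter_adj_insert_of_leaf {W : Finset V} {u u₀ v : V} (hu : u ∉ W)
    (hleaf : W.filter (G.Adj u) = {u₀}) (hv : v ∈ W) :
    #((insert u W).filter (G.Adj v)) = #(W.filter (G.Adj v)) + if v = u₀ then 1 else 0 := by
  have hvu : G.Adj v u ↔ v = u₀ := by
    rw [G.adj_comm, ← mem_singleton, ← hleaf, mem_filter, and_iff_right hv]
  rw [filter_insert]
  by_cases h : v = u₀
  · rw [if_pos (hvu.2 h), if_pos h, card_insert_of_notMem (fun h' => hu (mem_filter.1 h').1)]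
  · rw [if_neg (mt hvu.1 h), if_neg h, add_zero]

lemma ccoefProd_insert_leaf (k : V → ℤ) {W : Finset V} {u u₀ : V} (hu : u ∉ W)
    (hleaf : W.filter (G.Adj u) = {u₀}) :
    ccoefProd G k (insert u W) = (ccoefInt 1 (k u) : ℚ) *
      (ccoefProd G k W - ccoefProd G (k - Pi.single u₀ 1) W) := by
  have hu₀ : u₀ ∈ W := (mem_filter.1 (hleaf ▸ mem_singleton_self u₀)).1
  have hdeg_u : #((insert u W).filter (G.Adj u)) = 1 := by
    rw [filter_insert, if_neg (G.irrefl), hleaf, card_singleton]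
  rw [ccoefProd, prod_insert hu, hdeg_u,
    prod_congr rfl fun v hv => by rw [card_filter_adj_insert_of_leaf G hu hleaf hv],
    prod_ccoefInt_add_ite _ _ hu₀, ccoefProd, ccoefProd]

variable {G}

theorem LeafBuilt.alternatingMaxGain_eq {W : Finset V} (hW : LeafBuilt G W) (k : V → ℤ) :
    alternatingMaxGain G k W = ccoefProd G k W := by
  induction hW generalizing k with
  | singleton v => exact alternatingMaxGain_singleton G k v
  | insert_leaf _ hu hleaf ih =>
    rw [alternatingMaxGain_insert_leaf G k hu hleaf, ccoefProd_insert_leaf G k hu hleaf, ih, ih]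

theorem leafBuilt_of_connected_induce (hG : G.IsAcyclic) (W : Finset V)
    (hW : (G.induce (W : Set V)).Connected) : LeafBuilt G W := by
  induction W using Finset.strongInduction with
  | H W ih =>
  rcases le_or_gt #W 1 with hcard | hcard
  · obtain ⟨⟨v, hv⟩⟩ := hW.nonempty
    obtain ⟨w, rfl⟩ := card_eq_one.1 (le_antisymm hcard (card_pos.2 ⟨v, hv⟩))
    exact .singleton w
  have : Nontrivial (W : Set V) := (one_lt_card_iff_nontrivial.1 hcard).coe_sort
  have hT : (G.induce (W : Set V)).IsTree := ⟨hW, hG.induce _⟩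
  obtain ⟨x, hx⟩ := hT.exists_vert_degree_one_of_nontrivial
  obtain ⟨y, hxy, hy⟩ := SimpleGraph.degree_eq_one_iff_existsUnique_adj.1 hx
  have hleaf : (W.erase x.1).filter (G.Adj x.1) = {y.1} := by
    ext w
    simp only [mem_filter, mem_erase, mem_singleton]
    constructor
    · rintro ⟨⟨-, hwW⟩, hadj⟩
      exact congrArg Subtype.val (hy ⟨w, hwW⟩ hadj)
    · rintro rfl
      exact ⟨⟨(G.ne_of_adj hxy).symm, y.2⟩, hxy⟩
  have hconn : (G.induce (W.erase x.1 : Set V)).Connected := by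
    refine (hW.induce_compl_singleton_of_degree_eq_one hx).map
      ⟨fun z => ⟨z.1.1, mem_erase.2 ⟨fun h => z.2 (Subtype.ext h), z.1.2⟩⟩, id⟩ ?_
    rintro ⟨w, hw⟩
    exact ⟨⟨⟨w, mem_of_mem_erase hw⟩, fun h => ne_of_mem_erase hw (congrArg Subtype.val h)⟩, rfl⟩
  rw [← insert_erase x.2]
  exact .insert_leaf (ih _ (erase_ssubset x.2) hconn) (notMem_erase _ _) hleaf

theorem SimpleGraph.IsTree.leafBuilt_univ [Fintype V] (hG : G.IsTree) : LeafBuilt G univ :=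
  leafBuilt_of_connected_induce hG.isAcyclic _ <|
    hG.connected.map ⟨fun v => ⟨v, mem_coe.2 (mem_univ v)⟩, id⟩ fun ⟨v, _⟩ => ⟨v, rfl⟩

end LeafBuilt

section Lattice

variable {V : Type*} [Fintype V] {A : Matrix V V ℤ}

lemma Aq_mulVec_intCast (A : Matrix V V ℤ) (l : V → ℤ) :
    Aq A *ᵥ (fun v => (l v : ℚ)) = fun v => ((A *ᵥ l) v : ℚ) :=
  funext fun v => ((Int.castRingHom ℚ).map_mulVec A l v).symm

lemma dotProduct_Aq_mulVec_comm (hA : A.IsSymm) (x y : V → ℚ) :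
    x ⬝ᵥ Aq A *ᵥ y = y ⬝ᵥ Aq A *ᵥ x := by
  rw [dotProduct_mulVec, ← mulVec_transpose, show (Aq A)ᵀ = Aq A from (hA.map _).eq,
    dotProduct_comm]

variable [DecidableEq V]

lemma NegDef.isUnit_det (hA : NegDef A) : IsUnit (Aq A).det := by
  refine isUnit_iff_ne_zero.2 fun h => ?_
  obtain ⟨x, hx0, hx⟩ := exists_mulVec_eq_zero_iff.2 h
  simpa [hx] using hA x hx0

lemma chi_add (hA : A.IsSymm) (x y : V → ℚ) :
    chi A (x + y) = chi A x + chi A y - x ⬝ᵥ Aq A *ᵥ y := by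
  simp only [chi, mulVec_add, add_dotProduct, dotProduct_add]
  rw [dotProduct_Aq_mulVec_comm hA y x]
  ring

lemma mulVec_Kcan (hA : NegDef A) : Aq A *ᵥ Kcan A = fun v => -2 - (A v v : ℚ) := by
  rw [Kcan, mulVec_mulVec, mul_nonsing_inv _ hA.isUnit_det, one_mulVec]

lemma indicator_dotProduct (J : Finset V) (y : V → ℚ) :
    (fun v => if v ∈ J then 1 else 0) ⬝ᵥ y = ∑ v ∈ J, y v := by
  simp [dotProduct, ite_mul, sum_ite_mem]

lemma chi_indicator (hA : NegDef A) (G : SimpleGraph V)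
    (hAadj : ∀ v w : V, v ≠ w → A v w = if G.Adj v w then 1 else 0) (J : Finset V) :
    chi A (fun v => if v ∈ J then 1 else 0) = #J - adjPairCount G J / 2 := by
  set e : V → ℚ := fun v => if v ∈ J then 1 else 0
  have hrow : ∀ v, (Aq A *ᵥ e) v = ∑ w ∈ J, (A v w : ℚ) := fun v => by
    rw [mulVec, dotProduct_comm, indicator_dotProduct]
    rfl
  have hself : e ⬝ᵥ Aq A *ᵥ e = ∑ v ∈ J, (A v v : ℚ) + adjPairCount G J := by
    rw [indicator_dotProduct, adjPairCount, ← sum_add_distrib]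
    refine sum_congr rfl fun v hv => ?_
    rw [hrow, ← add_sum_erase J _ hv, ← add_sum_erase J _ hv, if_neg (G.irrefl), zero_add]
    congr 1
    refine sum_congr rfl fun w hw => ?_
    rw [hAadj v w (ne_of_mem_erase hw).symm]
    push_cast
    rfl
  have hK : e ⬝ᵥ Aq A *ᵥ Kcan A = ∑ v ∈ J, (-2 - (A v v : ℚ)) := by
    rw [mulVec_Kcan hA, indicator_dotProduct]
  rw [chi, mulVec_add, dotProduct_add, hself, hK, sum_sub_distrib, sum_const, nsmul_eq_mul]
  ring

lemma wcube_eq_chi_add_maxGain (hAsymm : A.IsSymm) (hA : NegDef A) (G : SimpleGraph V)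
    (hAadj : ∀ v w : V, v ≠ w → A v w = if G.Adj v w then 1 else 0) (l : V → ℤ) (J : Finset V) :
    wcube A l J = chi A (fun v => (l v : ℚ)) + maxGain G (-(A *ᵥ l)) J := by
  rw [wcube, maxGain, add_sup']
  refine sup'_congr _ rfl fun J' _ => ?_
  rw [show (fun v => (l v : ℚ) + if v ∈ J' then 1 else 0)
      = (fun v => (l v : ℚ)) + fun v => if v ∈ J' then 1 else 0 from rfl,
    chi_add hAsymm, chi_indicator hA G hAadj, dotProduct_Aq_mulVec_comm hAsymm,
    indicator_dotProduct, Aq_mulVec_intCast, gain]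
  simp only [Pi.neg_apply, Int.cast_neg, sum_add_distrib, sum_neg_distrib, sum_const,
    nsmul_eq_mul, mul_one]
  ring

lemma sum_smul_Estar_eq_iff (hA : NegDef A) (x y : V → ℚ) :
    ∑ v, x v • Estar A v = y ↔ x = -(Aq A *ᵥ y) := by
  have hsum : ∑ v, x v • Estar A v = -((Aq A)⁻¹ *ᵥ x) := by
    ext w
    simp [Estar, mulVec, dotProduct, mul_comm]
  rw [hsum, neg_eq_iff_eq_neg, ← mulVec_neg]
  constructor
  · intro h
    rw [← h, mulVec_mulVec, mul_nonsing_inv _ hA.isUnit_det, one_mulVec]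
  · rintro rfl
    rw [mulVec_mulVec, nonsing_inv_mul _ hA.isUnit_det, one_mulVec]

lemma zcoef_intCast (hA : NegDef A) (δ : V → ℕ) (l : V → ℤ) :
    zcoef A δ (fun v => (l v : ℚ)) = ∏ v, ccoefInt (δ v) ((-(A *ᵥ l)) v) := by
  set m := -(A *ᵥ l)
  have hsolve : ∀ k : V → ℕ,
      (∑ v, (k v : ℚ) • Estar A v) = (fun v => (l v : ℚ)) ↔ ∀ v, (k v : ℤ) = m v := by
    intro k
    rw [sum_smul_Estar_eq_iff hA, Aq_mulVec_intCast, funext_iff]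
    refine forall_congr' fun v => ?_
    simp only [m, Pi.neg_apply]
    norm_cast
  unfold zcoef
  by_cases hm : ∀ v, 0 ≤ m v
  · rw [finsum_eq_single _ (fun v => (m v).toNat),
      if_pos ((hsolve _).2 fun v => Int.toNat_of_nonneg (hm v))]
    · exact prod_congr rfl fun v _ => by rw [ccoefInt, if_pos (hm v)]
    · intro k hk
      refine if_neg fun h => hk (funext fun v => ?_)
      have := (hsolve k).1 h v
      omega
  · rw [finsum_eq_zero_of_forall_eq_zero fun k => if_neg fun h =>
      hm fun v => (hsolve k).1 h v ▸ Int.natCast_nonneg _]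
    obtain ⟨v, hv⟩ := not_forall.1 hm
    exact (prod_eq_zero (mem_univ v) (by rw [ccoefInt, if_neg hv])).symm

end Lattice

end Plumbing

/-- the coefficient `z(l)` equals the alternating sum of the weights of
all cubes based at `l`: `z(l) = Σ_{J ⊆ V} (−1)^{|J|+1} w(l, J)`. -/
theorem statement15 (V : Type) [Fintype V] [DecidableEq V]
    (G : SimpleGraph V) (hG : G.IsTree)
    (A : Matrix V V ℤ) (hAsymm : A.IsSymm)
    (hAadj : ∀ v w : V, v ≠ w → A v w = if G.Adj v w then 1 else 0)
    (hAneg : NegDef A)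
    (l : V → ℤ) :
    (zcoef A (deg G) (fun v => (l v : ℚ)) : ℚ)
      = ∑ J : Finset V, (-1 : ℚ) ^ (J.card + 1) * wcube A l J := by
  have hV : (Finset.univ : Finset V).Nonempty := Finset.univ_nonempty_iff.2 hG.connected.nonempty
  have hchi : ∑ J : Finset V, (-1 : ℚ) ^ (J.card + 1) * chi A (fun v => (l v : ℚ)) = 0 := by
    simpa [pow_succ, ← Finset.powerset_univ] using
      Finset.sum_powerset_neg_one_pow_card_mul hV (-chi A (fun v => (l v : ℚ)))
  calc (zcoef A (deg G) (fun v => (l v : ℚ)) : ℚ)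
      = ccoefProd G (-(A *ᵥ l)) Finset.univ := by
        simp [zcoef_intCast hAneg, ccoefProd, deg_eq_card_filter_adj]
    _ = alternatingMaxGain G (-(A *ᵥ l)) Finset.univ :=
        (hG.leafBuilt_univ.alternatingMaxGain_eq _).symm
    _ = _ := by
      simp only [wcube_eq_chi_add_maxGain hAsymm hAneg G hAadj, mul_add, Finset.sum_add_distrib,
        hchi, zero_add, alternatingMaxGain, Finset.powerset_univ]
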